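/- Let β > 0, μ > 1, and f, g ∈ E_{(β,μ)}. Define ψ(m) = (2π)^{-1/2} ∫_{-∞}^{∞} f(m - m₁) g(m₁) dm₁. Then ψ ∈ E_{(β,μ)}, and for all z in the strip H_β one has F⁻¹(f)(z) · F⁻¹(g)(z) = F⁻¹(ψ)(z). -/

import Mathlib

open MeasureTheory Real Complex

/-- Membership in the space `E_{(β,μ)}`: continuous functions with finite weighted sup norm. -/
def MemE (β μ : ℝ) (h : ℝ → ℂ) : Prop :=
  Continuous h ∧ BddAbove (Set.range fun m : ℝ =>
    (1 + |m|) ^ μ * Real.exp (β * |m|) * ‖h m‖)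

/-- The horizontal strip `H_β`. -/
def Hstrip (β : ℝ) : Set ℂ := {z : ℂ | |z.im| < β}

/-- The inverse Fourier transform at a real point. -/
noncomputable def invFourier (f : ℝ → ℂ) (x : ℝ) : ℂ :=
  (1 / Real.sqrt (2 * Real.pi)) * ∫ m : ℝ, f m * Complex.exp (Complex.I * x * m)

/-! With `w(m) = (1 + |m|)^μ e^{β|m|}`, the triangle inequality `|m| ≤ |m - b| + |b|` and
`|m| ≤ 2 max(|m - b|, |b|)` give
`w(m - b)⁻¹ w(b)⁻¹ ≤ 2^μ w(m)⁻¹ ((1 + |m - b|)^{-μ} + (1 + |b|)^{-μ})`,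
and since `μ > 1` the right-hand side integrates in `b` to `C w(m)⁻¹`: this is `ψ ∈ E_{(β,μ)}`.
On the real line the Fourier transform turns the convolution into a product, so `F G` and `H`
agree on `ℝ`, and the identity theorem carries this to the connected strip. -/

open FourierTransform Convolution Filter Topology ContinuousLinearMap

noncomputable def decayE (β μ m : ℝ) : ℝ := (1 + |m|) ^ (-μ) * Real.exp (-(β * |m|))

section Decay

variable {β μ : ℝ}

lemma decayE_eq_inv (m : ℝ) :
    decayE β μ m = ((1 + |m|) ^ μ * Real.exp (β * |m|))⁻¹ := by
  rw [decayE, Real.rpow_neg (by positivity), Real.exp_neg, mul_inv]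

lemma decayE_nonneg (m : ℝ) : 0 ≤ decayE β μ m := by
  unfold decayE; positivity

@[simp]
lemma decayE_zero : decayE β μ 0 = 1 := by
  simp [decayE]

lemma decayE_le_one_add_abs_rpow_neg (hβ : 0 ≤ β) (m : ℝ) :
    decayE β μ m ≤ (1 + |m|) ^ (-μ) := by
  unfold decayE
  exact mul_le_of_le_one_right (by positivity)
    (Real.exp_le_one_iff.2 (neg_nonpos.2 (by positivity)))

lemma integrable_one_add_abs_rpow_neg (hμ : 1 < μ) :
    Integrable fun t : ℝ => (1 + |t|) ^ (-μ) := by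
  simpa using integrable_one_add_norm (E := ℝ) (μ := volume) (r := μ) (by simpa using hμ)

lemma integrable_decayE (hβ : 0 ≤ β) (hμ : 1 < μ) : Integrable (decayE β μ) :=
  (integrable_one_add_abs_rpow_neg hμ).mono' (by unfold decayE; fun_prop) <|
    .of_forall fun m => by
      rw [Real.norm_of_nonneg (decayE_nonneg m)]
      exact decayE_le_one_add_abs_rpow_neg hβ m

lemma one_add_rpow_neg_le_two_rpow_mul (hμ : 0 ≤ μ) {s t : ℝ} (ht : 0 ≤ t)
    (hts : t ≤ 2 * s) : (1 + s) ^ (-μ) ≤ 2 ^ μ * (1 + t) ^ (-μ) := by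
  have h2 : (2 : ℝ) ^ μ * (2 * (1 + s)) ^ (-μ) = (1 + s) ^ (-μ) := by
    rw [Real.mul_rpow (by norm_num) (by linarith), Real.rpow_neg (by norm_num), ← mul_assoc,
      mul_inv_cancel₀ (by positivity), one_mul]
  rw [← h2]
  exact mul_le_mul_of_nonneg_left
    (Real.rpow_le_rpow_of_nonpos (by positivity) (by linarith) (by linarith)) (by positivity)

lemma one_add_abs_rpow_neg_mul_le (hμ : 0 ≤ μ) (a b : ℝ) :
    (1 + |a|) ^ (-μ) * (1 + |b|) ^ (-μ) ≤
      2 ^ μ * (1 + |a + b|) ^ (-μ) * ((1 + |a|) ^ (-μ) + (1 + |b|) ^ (-μ)) := by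
  wlog hba : |b| ≤ |a| generalizing a b
  · have := this b a (le_of_not_ge hba)
    rwa [mul_comm, add_comm b, add_comm ((1 + |b|) ^ (-μ))] at this
  have ha : (1 + |a|) ^ (-μ) ≤ 2 ^ μ * (1 + |a + b|) ^ (-μ) :=
    one_add_rpow_neg_le_two_rpow_mul hμ (abs_nonneg _)
      (by linarith [abs_add_le a b])
  calc (1 + |a|) ^ (-μ) * (1 + |b|) ^ (-μ)
      ≤ 2 ^ μ * (1 + |a + b|) ^ (-μ) * (1 + |b|) ^ (-μ) := by gcongr
    _ ≤ 2 ^ μ * (1 + |a + b|) ^ (-μ) * ((1 + |a|) ^ (-μ) + (1 + |b|) ^ (-μ)) := by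
      gcongr
      exact le_add_of_nonneg_left (by positivity)

lemma decayE_sub_mul_decayE_le (hβ : 0 ≤ β) (hμ : 0 ≤ μ) (m b : ℝ) :
    decayE β μ (m - b) * decayE β μ b ≤
      2 ^ μ * decayE β μ m * ((1 + |m - b|) ^ (-μ) + (1 + |b|) ^ (-μ)) := by
  have hexp : Real.exp (-(β * |m - b|)) * Real.exp (-(β * |b|)) ≤ Real.exp (-(β * |m|)) := by
    rw [← Real.exp_add, Real.exp_le_exp]
    nlinarith [abs_sub_abs_le_abs_sub m b]
  have hpoly := one_add_abs_rpow_neg_mul_le hμ (m - b) b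
  rw [sub_add_cancel] at hpoly
  calc decayE β μ (m - b) * decayE β μ b
      = ((1 + |m - b|) ^ (-μ) * (1 + |b|) ^ (-μ)) *
          (Real.exp (-(β * |m - b|)) * Real.exp (-(β * |b|))) := by unfold decayE; ring
    _ ≤ (2 ^ μ * (1 + |m|) ^ (-μ) * ((1 + |m - b|) ^ (-μ) + (1 + |b|) ^ (-μ))) *
          Real.exp (-(β * |m|)) := by gcongr
    _ = _ := by unfold decayE; ring

end Decay

section SpaceE

variable {β μ : ℝ} {f g h : ℝ → ℂ}

lemma memE_iff_exists_norm_le :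
    MemE β μ h ↔ Continuous h ∧ ∃ C, ∀ m, ‖h m‖ ≤ C * decayE β μ m := by
  simp only [MemE, bddAbove_def, Set.forall_mem_range, decayE_eq_inv]
  refine and_congr_right fun _ => exists_congr fun C => forall_congr' fun m => ?_
  exact (le_mul_inv_iff₀' (by positivity)).symm

lemma nonneg_of_norm_le_mul_decayE {C : ℝ} (hC : ∀ m, ‖h m‖ ≤ C * decayE β μ m) : 0 ≤ C := by
  simpa using (norm_nonneg _).trans (hC 0)

lemma MemE.integrable (hβ : 0 ≤ β) (hμ : 1 < μ) (hh : MemE β μ h) : Integrable h := by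
  obtain ⟨hc, C, hC⟩ := memE_iff_exists_norm_le.1 hh
  exact ((integrable_decayE hβ hμ).const_mul C).mono' hc.aestronglyMeasurable (.of_forall hC)

lemma MemE.bddAbove_norm (hβ : 0 ≤ β) (hμ : 0 ≤ μ) (hh : MemE β μ h) :
    BddAbove (Set.range fun m => ‖h m‖) := by
  obtain ⟨-, C, hC⟩ := memE_iff_exists_norm_le.1 hh
  refine ⟨C, Set.forall_mem_range.2 fun m => (hC m).trans ?_⟩
  refine mul_le_of_le_one_right (nonneg_of_norm_le_mul_decayE hC) ?_
  exact (decayE_le_one_add_abs_rpow_neg hβ m).trans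
    (Real.rpow_le_one_of_one_le_of_nonpos (by simp) (by linarith))

lemma MemE.const_mul (c : ℂ) (hh : MemE β μ h) : MemE β μ fun m => c * h m := by
  obtain ⟨hc, C, hC⟩ := memE_iff_exists_norm_le.1 hh
  refine memE_iff_exists_norm_le.2 ⟨continuous_const.mul hc, ‖c‖ * C, fun m => ?_⟩
  rw [norm_mul, mul_assoc]
  exact mul_le_mul_of_nonneg_left (hC m) (norm_nonneg c)

lemma norm_convolution_le {Cf Cg : ℝ} (hβ : 0 ≤ β) (hμ : 1 < μ)
    (hf : ∀ m, ‖f m‖ ≤ Cf * decayE β μ m) (hg : ∀ m, ‖g m‖ ≤ Cg * decayE β μ m) (m : ℝ) :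
    ‖(f ⋆[mul ℂ ℂ] g) m‖ ≤
      Cf * Cg * 2 ^ μ * (2 * ∫ t, (1 + |t|) ^ (-μ)) * decayE β μ m := by
  have hP := integrable_one_add_abs_rpow_neg hμ
  have hCf := nonneg_of_norm_le_mul_decayE hf
  have hCg := nonneg_of_norm_le_mul_decayE hg
  set K := Cf * Cg * 2 ^ μ * decayE β μ m
  have hpt (b : ℝ) : ‖f (m - b) * g b‖ ≤ K * ((1 + |m - b|) ^ (-μ) + (1 + |b|) ^ (-μ)) := by
    calc ‖f (m - b) * g b‖ ≤ (Cf * decayE β μ (m - b)) * (Cg * decayE β μ b) := by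
          rw [norm_mul]
          exact mul_le_mul (hf _) (hg _) (norm_nonneg _)
            (mul_nonneg hCf (decayE_nonneg _))
      _ = Cf * Cg * (decayE β μ (m - b) * decayE β μ b) := by ring
      _ ≤ Cf * Cg * (2 ^ μ * decayE β μ m * ((1 + |m - b|) ^ (-μ) + (1 + |b|) ^ (-μ))) :=
          mul_le_mul_of_nonneg_left (decayE_sub_mul_decayE_le hβ (by linarith) m b)
            (mul_nonneg hCf hCg)
      _ = _ := by ring
  rw [convolution_mul_swap]
  calc ‖∫ b, f (m - b) * g b‖
      ≤ ∫ b, K * ((1 + |m - b|) ^ (-μ) + (1 + |b|) ^ (-μ)) :=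
        norm_integral_le_of_norm_le (((hP.comp_sub_left m).add hP).const_mul K) (.of_forall hpt)
    _ = K * (2 * ∫ t, (1 + |t|) ^ (-μ)) := by
        rw [integral_const_mul, integral_add (hP.comp_sub_left m) hP,
          integral_sub_left_eq_self (fun t => (1 + |t|) ^ (-μ)), two_mul]
    _ = _ := by ring

lemma MemE.convolution (hβ : 0 ≤ β) (hμ : 1 < μ) (hf : MemE β μ f) (hg : MemE β μ g) :
    MemE β μ (f ⋆[mul ℂ ℂ] g) := by
  obtain ⟨-, Cf, hCf⟩ := memE_iff_exists_norm_le.1 hf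
  obtain ⟨hgc, Cg, hCg⟩ := memE_iff_exists_norm_le.1 hg
  refine memE_iff_exists_norm_le.2 ⟨?_, _, norm_convolution_le hβ hμ hCf hCg⟩
  exact (hg.bddAbove_norm hβ (by linarith)).continuous_convolution_right_of_integrable _
    (hf.integrable hβ hμ) hgc

end SpaceE

lemma integral_mul_cexp_eq_fourier (h : ℝ → ℂ) (x : ℝ) :
    ∫ m, h m * Complex.exp (Complex.I * x * m) = 𝓕 h (-x / (2 * π)) := by
  rw [Real.fourier_real_eq_integral_exp_smul]
  congr 1 with m
  rw [smul_eq_mul, mul_comm]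
  congr 1
  push_cast
  field_simp

lemma invFourier_const_mul (c : ℂ) (h : ℝ → ℂ) (x : ℝ) :
    invFourier (fun m => c * h m) x = c * invFourier h x := by
  simp only [invFourier, mul_assoc, integral_const_mul]
  ring

lemma invFourier_convolution {f g : ℝ → ℂ} (hf : Integrable f) (hg : Integrable g) (x : ℝ) :
    invFourier (fun m => (1 / Real.sqrt (2 * Real.pi)) * (f ⋆[mul ℂ ℂ] g) m) x =
      invFourier f x * invFourier g x := by
  rw [invFourier_const_mul]
  simp only [invFourier, integral_mul_cexp_eq_fourier, Real.fourier_mul_convolution_eq hf hg]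
  ring

lemma hstrip_eq_preimage_im (β : ℝ) : Hstrip β = Complex.im ⁻¹' Set.Ioo (-β) β := by
  ext z
  simp [Hstrip, abs_lt]

lemma isOpen_hstrip (β : ℝ) : IsOpen (Hstrip β) := by
  rw [hstrip_eq_preimage_im]
  exact isOpen_Ioo.preimage continuous_im

lemma convex_hstrip (β : ℝ) : Convex ℝ (Hstrip β) := by
  rw [hstrip_eq_preimage_im]
  exact (convex_Ioo (-β) β).linear_preimage imLm

lemma DifferentiableOn.eqOn_of_preconnected_of_ofReal_eq {U : Set ℂ} {F H : ℂ → ℂ}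
    (hF : DifferentiableOn ℂ F U) (hH : DifferentiableOn ℂ H U) (hU : IsOpen U)
    (hU' : IsPreconnected U) {x₀ : ℝ} (hx₀ : (x₀ : ℂ) ∈ U) (hFH : ∀ x : ℝ, F x = H x) :
    Set.EqOn F H U := by
  have hto : Tendsto ((↑) : ℝ → ℂ) (𝓝[≠] x₀) (𝓝[≠] (x₀ : ℂ)) :=
    continuous_ofReal.continuousWithinAt.tendsto_nhdsWithin fun _ hx => by simpa using hx
  exact (hF.analyticOnNhd hU).eqOn_of_preconnected_of_frequently_eq (hH.analyticOnNhd hU) hU' hx₀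
    (hto.frequently (.of_forall hFH))

/-- Let `f, g ∈ E_{(β,μ)}` with `β > 0`, `μ > 1`, and
`ψ(m) = (2π)^{-1/2} ∫ f(m-m₁) g(m₁) dm₁`. Then `ψ ∈ E_{(β,μ)}`, and for all holomorphic
extensions `F`, `G`, `H` of `F⁻¹(f)`, `F⁻¹(g)`, `F⁻¹(ψ)` to the strip `H_β`, one has
`F(z) G(z) = H(z)` on `H_β`. -/
theorem stmt3 (β μ : ℝ) (hβ : 0 < β) (hμ : 1 < μ) (f g : ℝ → ℂ)
    (hf : MemE β μ f) (hg : MemE β μ g) (ψ : ℝ → ℂ)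
    (hψdef : ∀ m : ℝ, ψ m =
      (1 / Real.sqrt (2 * Real.pi)) * ∫ m₁ : ℝ, f (m - m₁) * g m₁) :
    MemE β μ ψ ∧
    ∀ F G H : ℂ → ℂ,
      DifferentiableOn ℂ F (Hstrip β) → DifferentiableOn ℂ G (Hstrip β) →
      DifferentiableOn ℂ H (Hstrip β) →
      (∀ x : ℝ, F (x : ℂ) = invFourier f x) →
      (∀ x : ℝ, G (x : ℂ) = invFourier g x) →
      (∀ x : ℝ, H (x : ℂ) = invFourier ψ x) →
      ∀ z ∈ Hstrip β, F z * G z = H z := by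
  have hψ : ψ = fun m => (1 / Real.sqrt (2 * Real.pi)) * (f ⋆[mul ℂ ℂ] g) m :=
    funext fun m => by rw [hψdef, convolution_mul_swap]
  subst hψ
  refine ⟨(hf.convolution hβ.le hμ hg).const_mul _, fun F G H hF hG hH hFf hGg hHψ => ?_⟩
  refine (hF.mul hG).eqOn_of_preconnected_of_ofReal_eq hH (isOpen_hstrip β)
    (convex_hstrip β).isPreconnected (x₀ := 0) (by simp [Hstrip, hβ]) fun x => ?_
  rw [Pi.mul_apply, hFf, hGg, hHψ,
    invFourier_convolution (hf.integrable hβ.le hμ) (hg.integrable hβ.le hμ)]
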